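/- arXiv:1901.00799 — 2 statements merged into one kernel-verified Lean document; each statement's English description precedes it below -/
import Mathlib

section
/- Let ε > 0 and σ ≥ 1, and for s ∈ [1, σ] let E(s) = {(x,y) ∈ ℝ² : x²/s² + s²y² ≤ ε²}. Then the area of the union ⋃_{s ∈ [1,σ]} E(s) equals (π + 2·log(σ))·ε². -/
/-!
The ellipse `E(s)` meets the vertical line through `x` in `{y | y² ≤ (ε² - x²/s²)/s²}`, so the
union is the region `y² ≤ g(x)` under the upper envelope `g` of these slices over `s ∈ [1, σ]`.
In `u = s⁻²` a slice is the concave quadratic `u (ε² - x² u)`, maximal at `s = √2 |x| / ε`;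
clamping this scale to `[1, σ]` shows that `g` is the disc slice `ε² - x²` for `2x² ≤ ε²`, the
hyperbola `(ε² / 2x)²` for `ε² ≤ 2x² ≤ σ²ε²`, and the slice of `E(σ)` beyond. By Fubini the area
is `∫ 2√g`. Rescaling `x = σu` turns the `E(σ)` part into the missing part of the disc, so the two
elliptic parts add up to the area `πε²` of the disc, while the hyperbolic parts contribute
`2 ∫_{ε/√2}^{σε/√2} ε²/x dx = 2ε² log σ`.
-/

open MeasureTheory Real Set

theorem Real.volume_setOf_sq_le (c : ℝ) :
    volume {y : ℝ | y ^ 2 ≤ c} = ENNReal.ofReal (2 * √c) := by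
  rcases lt_or_ge c 0 with hc | hc
  · have : {y : ℝ | y ^ 2 ≤ c} = ∅ := eq_empty_of_forall_notMem fun y hy ↦
      (sq_nonneg y).not_gt (hy.trans_lt hc)
    simp [this, sqrt_eq_zero_of_nonpos hc.le]
  · have : {y : ℝ | y ^ 2 ≤ c} = Icc (-√c) √c := by ext; exact Real.sq_le hc
    rw [this, volume_Icc]
    congr 1
    ring

theorem MeasureTheory.Measure.prod_setOf_sq_le {α : Type*} [MeasurableSpace α] (μ : Measure α)
    [SFinite μ] {g : α → ℝ} (hg : Measurable g) :
    μ.prod volume {p : α × ℝ | p.2 ^ 2 ≤ g p.1} = ∫⁻ x, ENNReal.ofReal (2 * √(g x)) ∂μ := by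
  rw [Measure.prod_apply (measurableSet_le (by fun_prop) (by fun_prop))]
  exact lintegral_congr fun x ↦ Real.volume_setOf_sq_le (g x)

theorem integral_sqrt_one_sub_sq_zero_one : ∫ x in (0 : ℝ)..1, √(1 - x ^ 2) = π / 4 := by
  have hint (a b : ℝ) : IntervalIntegrable (fun x : ℝ ↦ √(1 - x ^ 2)) volume a b :=
    (by fun_prop : Continuous fun x : ℝ ↦ √(1 - x ^ 2)).intervalIntegrable a b
  have hsymm : ∫ x in (-1 : ℝ)..0, √(1 - x ^ 2) = ∫ x in (0 : ℝ)..1, √(1 - x ^ 2) := by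
    rw [← neg_zero, ← intervalIntegral.integral_comp_neg fun x : ℝ ↦ √(1 - x ^ 2)]
    simp only [neg_sq, neg_zero]
  linarith [integral_sqrt_one_sub_sq,
    intervalIntegral.integral_add_adjacent_intervals (hint (-1) 0) (hint 0 1)]

theorem integral_sqrt_sq_sub_sq {r : ℝ} (hr : 0 ≤ r) :
    ∫ x in (0 : ℝ)..r, √(r ^ 2 - x ^ 2) = π * r ^ 2 / 4 := by
  obtain rfl | hr := hr.eq_or_lt
  · simp
  have hscale (x : ℝ) : √(r ^ 2 - x ^ 2) = r * √(1 - (x / r) ^ 2) := by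
    rw [← sqrt_sq hr.le, ← sqrt_mul (sq_nonneg r), sqrt_sq hr.le]
    congr 1
    field_simp
  simp_rw [hscale, intervalIntegral.integral_const_mul,
    intervalIntegral.integral_comp_div (fun x ↦ √(1 - x ^ 2)) hr.ne', zero_div, div_self hr.ne',
    integral_sqrt_one_sub_sq_zero_one, smul_eq_mul]
  ring

noncomputable def ellipseSliceSq (ε s x : ℝ) : ℝ := (ε ^ 2 - x ^ 2 / s ^ 2) / s ^ 2

theorem sq_le_ellipseSliceSq_iff {ε s x y : ℝ} (hs : 0 < s) :
    y ^ 2 ≤ ellipseSliceSq ε s x ↔ x ^ 2 / s ^ 2 + s ^ 2 * y ^ 2 ≤ ε ^ 2 := by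
  rw [ellipseSliceSq, le_div_iff₀ (by positivity)]
  constructor <;> intro h <;> linarith

/-- In `u = s⁻²` the slice is `u (ε² - x² u)`; the hypothesis is the factored difference of its
values at `u = t⁻²` and `u = s⁻²`. -/
theorem ellipseSliceSq_le_ellipseSliceSq {ε s t x : ℝ}
    (h : 0 ≤ ((t ^ 2)⁻¹ - (s ^ 2)⁻¹) * (ε ^ 2 - x ^ 2 * ((s ^ 2)⁻¹ + (t ^ 2)⁻¹))) :
    ellipseSliceSq ε s x ≤ ellipseSliceSq ε t x := by
  simp only [ellipseSliceSq, div_eq_mul_inv]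
  linarith

theorem integral_sqrt_ellipseSliceSq {ε s : ℝ} (hs : 0 < s) (a b : ℝ) :
    ∫ x in s * a..s * b, √(ellipseSliceSq ε s x) = ∫ x in a..b, √(ε ^ 2 - x ^ 2) := by
  have h (x : ℝ) : √(ellipseSliceSq ε s x) = s⁻¹ * √(ε ^ 2 - (x / s) ^ 2) := by
    rw [ellipseSliceSq, div_pow, sqrt_div' _ (sq_nonneg s), sqrt_sq hs.le, div_eq_inv_mul]
  simp_rw [h, intervalIntegral.integral_const_mul,
    intervalIntegral.integral_comp_div (fun x ↦ √(ε ^ 2 - x ^ 2)) hs.ne', smul_eq_mul,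
    mul_div_cancel_left₀ _ hs.ne', inv_mul_cancel_left₀ hs.ne']

-- `√(2x²/ε²) = √2 |x| / ε` maximizes `s ↦ ellipseSliceSq ε s x` over all `s > 0`.
noncomputable def optimalScale (ε σ x : ℝ) : ℝ := max 1 (min σ √(2 * x ^ 2 / ε ^ 2))

section OptimalScale

variable {ε σ x : ℝ}

theorem one_le_optimalScale : 1 ≤ optimalScale ε σ x := le_max_left _ _

theorem optimalScale_mem_Icc (hσ : 1 ≤ σ) : optimalScale ε σ x ∈ Icc 1 σ :=
  ⟨one_le_optimalScale, max_le hσ (min_le_left _ _)⟩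

theorem optimalScale_of_le (hε : 0 < ε) (h : 2 * x ^ 2 ≤ ε ^ 2) : optimalScale ε σ x = 1 :=
  max_eq_left ((min_le_right _ _).trans (sqrt_le_one.2 ((div_le_one (by positivity)).2 h)))

theorem sq_optimalScale (hε : 0 < ε) (hσ : 0 ≤ σ) (h₁ : ε ^ 2 ≤ 2 * x ^ 2)
    (h₂ : 2 * x ^ 2 ≤ σ ^ 2 * ε ^ 2) : optimalScale ε σ x ^ 2 = 2 * x ^ 2 / ε ^ 2 := by
  have hε2 : 0 < ε ^ 2 := by positivity
  have h₁' : 1 ≤ √(2 * x ^ 2 / ε ^ 2) := one_le_sqrt.2 ((one_le_div hε2).2 h₁)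
  have h₂' : √(2 * x ^ 2 / ε ^ 2) ≤ σ := by
    rw [sqrt_le_left hσ, div_le_iff₀ hε2]
    exact h₂
  rw [optimalScale, min_eq_right h₂', max_eq_right h₁', sq_sqrt (by positivity)]

theorem optimalScale_of_ge (hε : 0 < ε) (hσ : 1 ≤ σ) (h : σ ^ 2 * ε ^ 2 ≤ 2 * x ^ 2) :
    optimalScale ε σ x = σ := by
  rw [optimalScale, min_eq_left ((le_sqrt (by positivity) (by positivity)).2
    ((le_div_iff₀ (by positivity)).2 h)), max_eq_right hσ]

theorem ellipseSliceSq_le_optimalScale {s : ℝ} (hε : 0 < ε) (hs : s ∈ Icc 1 σ) :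
    ellipseSliceSq ε s x ≤ ellipseSliceSq ε (optimalScale ε σ x) x := by
  have hσ : 1 ≤ σ := hs.1.trans hs.2
  apply ellipseSliceSq_le_ellipseSliceSq
  have hu₁ : (s ^ 2)⁻¹ ≤ 1 := inv_le_one_of_one_le₀ (one_le_pow₀ hs.1)
  have hu₀ : 0 ≤ (s ^ 2)⁻¹ := by positivity
  rcases le_total (2 * x ^ 2) (ε ^ 2) with h | h
  · rw [optimalScale_of_le hε h, one_pow, inv_one]
    apply mul_nonneg (by linarith)
    nlinarith
  rcases le_total (2 * x ^ 2) (σ ^ 2 * ε ^ 2) with h' | h'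
  · rw [sq_optimalScale hε (by linarith) h h', inv_div]
    have hx : x ≠ 0 := by rintro rfl; nlinarith
    have key : (ε ^ 2 / (2 * x ^ 2) - (s ^ 2)⁻¹) *
        (ε ^ 2 - x ^ 2 * ((s ^ 2)⁻¹ + ε ^ 2 / (2 * x ^ 2))) =
        x ^ 2 * (ε ^ 2 / (2 * x ^ 2) - (s ^ 2)⁻¹) ^ 2 := by
      field_simp
      ring
    rw [key]
    positivity
  · rw [optimalScale_of_ge hε hσ h']
    have hv : (σ ^ 2)⁻¹ ≤ (s ^ 2)⁻¹ :=
      inv_anti₀ (by nlinarith [hs.1]) (pow_le_pow_left₀ (by linarith [hs.1]) hs.2 2)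
    have hv' : ε ^ 2 ≤ 2 * x ^ 2 * (σ ^ 2)⁻¹ := by
      rw [← div_eq_mul_inv, le_div_iff₀ (by positivity)]
      linarith
    apply mul_nonneg_of_nonpos_of_nonpos (by linarith)
    nlinarith

end OptimalScale

noncomputable def ellipseEnvelope (ε σ x : ℝ) : ℝ := ellipseSliceSq ε (optimalScale ε σ x) x

section Envelope

variable {ε σ : ℝ}

theorem iUnion_ellipses_eq (hε : 0 < ε) (hσ : 1 ≤ σ) :
    ⋃ s ∈ Icc (1 : ℝ) σ, {p : ℝ × ℝ | p.1 ^ 2 / s ^ 2 + s ^ 2 * p.2 ^ 2 ≤ ε ^ 2} =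
      {p : ℝ × ℝ | p.2 ^ 2 ≤ ellipseEnvelope ε σ p.1} := by
  ext ⟨x, y⟩
  simp only [mem_iUnion, mem_ofPred_eq, exists_prop]
  constructor
  · rintro ⟨s, hs, h⟩
    exact ((sq_le_ellipseSliceSq_iff (by linarith [hs.1])).2 h).trans
      (ellipseSliceSq_le_optimalScale hε hs)
  · intro h
    exact ⟨_, optimalScale_mem_Icc hσ,
      (sq_le_ellipseSliceSq_iff (by linarith [one_le_optimalScale (ε := ε) (σ := σ) (x := x)])).1 h⟩

theorem continuous_ellipseEnvelope : Continuous (ellipseEnvelope ε σ) := by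
  have hs : Continuous (optimalScale ε σ) := by unfold optimalScale; fun_prop
  have hs0 (x : ℝ) : optimalScale ε σ x ^ 2 ≠ 0 :=
    pow_ne_zero 2 (by linarith [one_le_optimalScale (ε := ε) (σ := σ) (x := x)])
  exact (continuous_const.sub ((continuous_pow 2).div (hs.pow 2) hs0)).div (hs.pow 2) hs0

theorem ellipseEnvelope_abs (x : ℝ) : ellipseEnvelope ε σ |x| = ellipseEnvelope ε σ x := by
  simp only [ellipseEnvelope, ellipseSliceSq, optimalScale, sq_abs]

theorem ellipseEnvelope_of_le {x : ℝ} (hε : 0 < ε) (h : 2 * x ^ 2 ≤ ε ^ 2) :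
    ellipseEnvelope ε σ x = ε ^ 2 - x ^ 2 := by
  simp [ellipseEnvelope, ellipseSliceSq, optimalScale_of_le hε h]

theorem ellipseEnvelope_of_le_of_le {x : ℝ} (hε : 0 < ε) (hσ : 0 ≤ σ) (h₁ : ε ^ 2 ≤ 2 * x ^ 2)
    (h₂ : 2 * x ^ 2 ≤ σ ^ 2 * ε ^ 2) : ellipseEnvelope ε σ x = (ε ^ 2 / (2 * x)) ^ 2 := by
  have hx : x ≠ 0 := by rintro rfl; nlinarith
  rw [ellipseEnvelope, ellipseSliceSq, sq_optimalScale hε hσ h₁ h₂]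
  field_simp
  ring

theorem ellipseEnvelope_of_ge {x : ℝ} (hε : 0 < ε) (hσ : 1 ≤ σ)
    (h : σ ^ 2 * ε ^ 2 ≤ 2 * x ^ 2) : ellipseEnvelope ε σ x = ellipseSliceSq ε σ x := by
  rw [ellipseEnvelope, optimalScale_of_ge hε hσ h]

theorem ellipseEnvelope_nonpos {x : ℝ} (hε : 0 < ε) (hσ : 1 ≤ σ) (h : σ ^ 2 * ε ^ 2 ≤ x ^ 2) :
    ellipseEnvelope ε σ x ≤ 0 := by
  rw [ellipseEnvelope_of_ge hε hσ (by nlinarith), ellipseSliceSq]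
  apply div_nonpos_of_nonpos_of_nonneg _ (sq_nonneg σ)
  rw [sub_nonpos, le_div_iff₀ (by positivity)]
  linarith

theorem integrable_sqrt_ellipseEnvelope (hε : 0 < ε) (hσ : 1 ≤ σ) :
    Integrable fun x ↦ √(ellipseEnvelope ε σ x) := by
  refine continuous_ellipseEnvelope.sqrt.integrable_of_hasCompactSupport <|
    HasCompactSupport.intro (isCompact_Icc (a := -(σ * ε)) (b := σ * ε)) fun x hx ↦ ?_
  rw [mem_Icc, ← abs_le, not_le] at hx
  refine sqrt_eq_zero_of_nonpos (ellipseEnvelope_nonpos hε hσ ?_)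
  rw [← sq_abs x, ← mul_pow]
  exact pow_le_pow_left₀ (by positivity) hx.le 2

theorem integral_sqrt_ellipseEnvelope_eq_two_mul (hε : 0 < ε) (hσ : 1 ≤ σ) :
    ∫ x, √(ellipseEnvelope ε σ x) = 2 * ∫ x in (0 : ℝ)..σ * ε, √(ellipseEnvelope ε σ x) := by
  calc ∫ x, √(ellipseEnvelope ε σ x) = ∫ x, √(ellipseEnvelope ε σ |x|) := by
        simp only [ellipseEnvelope_abs]
    _ = 2 * ∫ x in Ioi 0, √(ellipseEnvelope ε σ x) :=
      integral_comp_abs (f := fun x ↦ √(ellipseEnvelope ε σ x))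
    _ = 2 * ∫ x in (0 : ℝ)..σ * ε, √(ellipseEnvelope ε σ x) := by
      rw [intervalIntegral.integral_of_le (by positivity),
        setIntegral_eq_of_subset_of_forall_sdiff_eq_zero measurableSet_Ioi Ioc_subset_Ioi_self]
      rintro x ⟨hx₀, hx⟩
      simp only [mem_Ioi, mem_Ioc, not_and, not_le] at hx₀ hx
      refine sqrt_eq_zero_of_nonpos (ellipseEnvelope_nonpos hε hσ ?_)
      rw [← mul_pow]
      exact pow_le_pow_left₀ (by positivity) (hx hx₀).le 2

theorem two_mul_div_sqrt_two_sq (ε : ℝ) : 2 * (ε / √2) ^ 2 = ε ^ 2 := by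
  rw [div_pow, sq_sqrt zero_le_two]
  ring

theorem intervalIntegral_sqrt_ellipseEnvelope_inner (hε : 0 < ε) :
    ∫ x in (0 : ℝ)..ε / √2, √(ellipseEnvelope ε σ x) = ∫ x in (0 : ℝ)..ε / √2, √(ε ^ 2 - x ^ 2) := by
  refine intervalIntegral.integral_congr fun x hx ↦ ?_
  rw [uIcc_of_le (by positivity)] at hx
  rw [ellipseEnvelope_of_le hε (by nlinarith [hx.1, hx.2, two_mul_div_sqrt_two_sq ε])]

theorem intervalIntegral_sqrt_ellipseEnvelope_middle (hε : 0 < ε) (hσ : 1 ≤ σ) :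
    ∫ x in ε / √2..σ * (ε / √2), √(ellipseEnvelope ε σ x) = ε ^ 2 / 2 * log σ := by
  have ha : 0 < ε / √2 := by positivity
  have hσa : ε / √2 ≤ σ * (ε / √2) := le_mul_of_one_le_left ha.le hσ
  have ha2 := two_mul_div_sqrt_two_sq ε
  have hyperbola : EqOn (fun x ↦ √(ellipseEnvelope ε σ x)) (fun x ↦ ε ^ 2 / 2 * x⁻¹)
      (uIcc (ε / √2) (σ * (ε / √2))) := by
    intro x hx
    rw [uIcc_of_le hσa] at hx
    have hx0 : 0 < x := ha.trans_le hx.1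
    show √(ellipseEnvelope ε σ x) = ε ^ 2 / 2 * x⁻¹
    rw [ellipseEnvelope_of_le_of_le hε (by linarith) (by nlinarith [hx.1]) (by nlinarith [hx.2]),
      sqrt_sq (by positivity)]
    field_simp
  rw [intervalIntegral.integral_congr hyperbola, intervalIntegral.integral_const_mul,
    integral_inv_of_pos ha (by positivity), mul_div_cancel_right₀ _ ha.ne']

theorem intervalIntegral_sqrt_ellipseEnvelope_outer (hε : 0 < ε) (hσ : 1 ≤ σ) :
    ∫ x in σ * (ε / √2)..σ * ε, √(ellipseEnvelope ε σ x) = ∫ x in ε / √2..ε, √(ε ^ 2 - x ^ 2) := by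
  rw [← integral_sqrt_ellipseSliceSq (by positivity : 0 < σ)]
  refine intervalIntegral.integral_congr fun x hx ↦ ?_
  have hε' : ε / √2 ≤ ε := div_le_self hε.le (one_le_sqrt.2 one_le_two)
  rw [uIcc_of_le (mul_le_mul_of_nonneg_left hε' (by positivity))] at hx
  refine congrArg sqrt (ellipseEnvelope_of_ge hε hσ ?_)
  calc σ ^ 2 * ε ^ 2 = 2 * (σ * (ε / √2)) ^ 2 := by rw [mul_pow, ← two_mul_div_sqrt_two_sq ε]; ring
    _ ≤ 2 * x ^ 2 := by gcongr; exact hx.1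

theorem integral_sqrt_ellipseEnvelope (hε : 0 < ε) (hσ : 1 ≤ σ) :
    ∫ x, √(ellipseEnvelope ε σ x) = (π / 2 + log σ) * ε ^ 2 := by
  have hint (u v : ℝ) : IntervalIntegrable (fun x ↦ √(ellipseEnvelope ε σ x)) volume u v :=
    continuous_ellipseEnvelope.sqrt.intervalIntegrable u v
  have hdisc (u v : ℝ) : IntervalIntegrable (fun x ↦ √(ε ^ 2 - x ^ 2)) volume u v :=
    (by fun_prop : Continuous fun x : ℝ ↦ √(ε ^ 2 - x ^ 2)).intervalIntegrable u v
  rw [integral_sqrt_ellipseEnvelope_eq_two_mul hε hσ,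
    ← intervalIntegral.integral_add_adjacent_intervals (hint 0 _) (hint (ε / √2) (σ * ε)),
    ← intervalIntegral.integral_add_adjacent_intervals (hint (ε / √2) (σ * (ε / √2)))
      (hint (σ * (ε / √2)) (σ * ε)),
    intervalIntegral_sqrt_ellipseEnvelope_inner hε,
    intervalIntegral_sqrt_ellipseEnvelope_middle hε hσ,
    intervalIntegral_sqrt_ellipseEnvelope_outer hε hσ, add_left_comm,
    intervalIntegral.integral_add_adjacent_intervals (hdisc _ _) (hdisc _ _),
    integral_sqrt_sq_sub_sq hε.le]
  ring

end Envelope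

/-- Proposition 2: the area of the union of the ellipses
`E(s) = {(x,y) : x²/s² + s²y² ≤ ε²}` over `s ∈ [1, σ]` equals `(π + 2 log σ)·ε²`. -/
theorem area_union_ellipses (ε σ : ℝ) (hε : 0 < ε) (hσ : 1 ≤ σ) :
    volume (⋃ s ∈ Set.Icc (1 : ℝ) σ,
        {p : ℝ × ℝ | p.1 ^ 2 / s ^ 2 + s ^ 2 * p.2 ^ 2 ≤ ε ^ 2}) =
      ENNReal.ofReal ((π + 2 * Real.log σ) * ε ^ 2) := by
  rw [iUnion_ellipses_eq hε hσ, Measure.volume_eq_prod,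
    Measure.prod_setOf_sq_le volume continuous_ellipseEnvelope.measurable,
    ← ofReal_integral_eq_lintegral_ofReal ((integrable_sqrt_ellipseEnvelope hε hσ).const_mul 2)
      (ae_of_all _ fun _ ↦ by positivity),
    integral_const_mul, integral_sqrt_ellipseEnvelope hε hσ]
  congr 1
  ring
end

section
/- Suppose W(t) = Σ(t)·V(t)ᵀ where Σ(t) = diag(σ₁(t), σ₂(t)) with σ₁, σ₂ differentiable and positive, and V(t) is a rotation satisfying V'(t) = ω(t)·J·V(t) with J = [[0,−1],[1,0]]. Then W'(t) = M(t)·W(t) where M(t) = [[σ₁'/σ₁, ω·σ₁/σ₂],[−ω·σ₂/σ₁, σ₂'/σ₂]]. -/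
/-!
By the product rule, `W = Σ Vᵀ` satisfies `W' = Σ' Vᵀ + ω Σ Vᵀ Jᵀ`. A rotation of the plane
commutes with `J`, so `Vᵀ Jᵀ = Jᵀ Vᵀ` and `W' = (Σ' Σ⁻¹ + ω Σ Jᵀ Σ⁻¹) W`; the matrix in
parentheses is `M`.
-/

open Matrix

section EntrywiseDeriv

variable {ι κ μ : Type*} {t : ℝ}

theorem Matrix.hasDerivAt_mul_apply [Fintype κ] {A : ℝ → Matrix ι κ ℝ} {B : ℝ → Matrix κ μ ℝ}
    {A' : Matrix ι κ ℝ} {B' : Matrix κ μ ℝ}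
    (hA : ∀ i k, HasDerivAt (fun u => A u i k) (A' i k) t)
    (hB : ∀ k j, HasDerivAt (fun u => B u k j) (B' k j) t) (i : ι) (j : μ) :
    HasDerivAt (fun u => (A u * B u) i j) ((A' * B t + A t * B') i j) t := by
  simp only [mul_apply, add_apply, ← Finset.sum_add_distrib]
  exact HasDerivAt.fun_sum fun k _ => (hA i k).mul (hB k j)

theorem Matrix.hasDerivAt_diagonal_apply [DecidableEq ι] {d : ℝ → ι → ℝ} {d' : ι → ℝ}
    (hd : ∀ i, HasDerivAt (fun u => d u i) (d' i) t) (i j : ι) :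
    HasDerivAt (fun u => diagonal (d u) i j) (diagonal d' i j) t := by
  rcases eq_or_ne i j with rfl | hij
  · simpa only [diagonal_apply_eq] using hd i
  · simpa only [diagonal_apply_ne _ hij] using hasDerivAt_const t (0 : ℝ)

end EntrywiseDeriv

theorem Matrix.commute_J_of_mul_transpose_eq_one_of_det_eq_one {V : Matrix (Fin 2) (Fin 2) ℝ}
    (horth : V * Vᵀ = 1) (hdet : V.det = 1) : Commute !![0, -1; 1, 0] V := by
  have hrow : V 0 0 * V 0 0 + V 0 1 * V 0 1 = 1 := by
    simpa [mul_apply, Fin.sum_univ_two] using congrFun₂ horth 0 0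
  have hrows : V 0 0 * V 1 0 + V 0 1 * V 1 1 = 0 := by
    simpa [mul_apply, Fin.sum_univ_two] using congrFun₂ horth 0 1
  have hdet' : V 0 0 * V 1 1 - V 0 1 * V 1 0 = 1 := by rwa [det_fin_two] at hdet
  have h11 : V 1 1 = V 0 0 := by
    linear_combination (-V 1 1) * hrow + V 0 0 * hdet' + V 0 1 * hrows
  have h10 : V 1 0 = -V 0 1 := by
    linear_combination (-V 1 0) * hrow - V 0 1 * hdet' + V 0 0 * hrows
  rw [eta_fin_two V, h11, h10]
  simp [Commute, SemiconjBy]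

theorem Matrix.diagonal_mul_transpose_rotation_deriv_eq {a b a' b' ω : ℝ} (ha : a ≠ 0)
    (hb : b ≠ 0) {V : Matrix (Fin 2) (Fin 2) ℝ} (hJ : Commute !![0, -1; 1, 0] V) :
    diagonal ![a', b'] * Vᵀ + diagonal ![a, b] * (ω • (!![0, -1; 1, 0] * V))ᵀ =
      !![a' / a, ω * a / b; -(ω * b / a), b' / b] * (diagonal ![a, b] * Vᵀ) := by
  rw [hJ.eq, transpose_smul, transpose_mul, Matrix.mul_smul, ← Matrix.mul_assoc, ← smul_mul,
    ← add_mul, ← Matrix.mul_assoc]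
  congr 1
  ext i j
  fin_cases i <;> fin_cases j <;> simp [ha, hb]

/-- If `W(t) = Σ(t) V(t)ᵀ` with `Σ(t) = diag(σ₁(t), σ₂(t))` (`σᵢ` differentiable and
positive) and `V(t)` a rotation satisfying `V' = ω J V`, `J = [[0,-1],[1,0]]`, then
`W' = M W` with `M = [[σ₁'/σ₁, ω σ₁/σ₂], [−ω σ₂/σ₁, σ₂'/σ₂]]`. -/
theorem singular_rotation_ode (σ₁ σ₂ σ₁' σ₂' ω : ℝ → ℝ)
    (V : ℝ → Matrix (Fin 2) (Fin 2) ℝ)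
    (hσ₁ : ∀ t, HasDerivAt σ₁ (σ₁' t) t) (hσ₂ : ∀ t, HasDerivAt σ₂ (σ₂' t) t)
    (hσ₁pos : ∀ t, 0 < σ₁ t) (hσ₂pos : ∀ t, 0 < σ₂ t)
    (hrot : ∀ t, V t * (V t)ᵀ = 1 ∧ (V t).det = 1)
    (hV : ∀ t i j, HasDerivAt (fun u => V u i j)
      ((ω t • ((!![0, -1; 1, 0] : Matrix (Fin 2) (Fin 2) ℝ) * V t)) i j) t) :
    ∀ t i j, HasDerivAt (fun u => (Matrix.diagonal ![σ₁ u, σ₂ u] * (V u)ᵀ) i j)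
      ((!![σ₁' t / σ₁ t, ω t * σ₁ t / σ₂ t; -(ω t * σ₂ t / σ₁ t), σ₂' t / σ₂ t] *
        (Matrix.diagonal ![σ₁ t, σ₂ t] * (V t)ᵀ)) i j) t := by
  intro t
  have hdiag : ∀ i j, HasDerivAt (fun u => diagonal ![σ₁ u, σ₂ u] i j)
      (diagonal ![σ₁' t, σ₂' t] i j) t :=
    hasDerivAt_diagonal_apply <| Fin.forall_fin_two.2 ⟨hσ₁ t, hσ₂ t⟩
  have hJ := commute_J_of_mul_transpose_eq_one_of_det_eq_one (hrot t).1 (hrot t).2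
  rw [← diagonal_mul_transpose_rotation_deriv_eq (hσ₁pos t).ne' (hσ₂pos t).ne' hJ]
  exact hasDerivAt_mul_apply hdiag fun i j => hV t j i
end
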